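/- arXiv:math-ph/0609040 — 4 statements merged into one kernel-verified Lean document; each statement's English description precedes it below -/
import Mathlib

section
/- Let σ be a Borel probability measure on ℝ. Then for every y ∈ ℝ and every a ∈ ℝ \ {0}, one has |Re(a·F_σ(y + ia))| ≤ ∫_ℝ 1/√(((x − y)/a)² + 1) dσ(x) ≤ |Im(a·F_σ(y + ia))|^{1/2}. -/
open MeasureTheory Complex Set

/-- The Borel transform of a measure `σ` on `ℝ`: `F_σ(z) = ∫ 1/(x - z) dσ(x)`. -/
noncomputable def borelTransform (σ : Measure ℝ) (z : ℂ) : ℂ :=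
  ∫ x : ℝ, ((x : ℂ) - z)⁻¹ ∂σ

/-!
With `t = (x - y) / a` one has `a (x - (y + i a))⁻¹ = (t - i)⁻¹ = (t + i) / (t² + 1)`.
The real part `t / (t² + 1)` is bounded in absolute value by `g = 1 / √(t² + 1)`, and the
imaginary part is exactly `g²`, so the second inequality is `(∫ g)² ≤ ∫ g²`, i.e. the
nonnegativity of the variance of `g`.
-/

open ProbabilityTheory in
theorem integral_le_sqrt_integral_sq {Ω : Type*} [MeasurableSpace Ω] {μ : Measure Ω}
    [IsProbabilityMeasure μ] {X : Ω → ℝ} (hX : MemLp X 2 μ) :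
    ∫ ω, X ω ∂μ ≤ √(∫ ω, X ω ^ 2 ∂μ) := by
  have h := variance_nonneg X μ
  rw [variance_eq_sub hX] at h
  exact (le_abs_self _).trans (Real.abs_le_sqrt (by simpa using h))

namespace Complex

theorem inv_ofReal_sub_I_re (t : ℝ) : ((t : ℂ) - I)⁻¹.re = t / (t ^ 2 + 1) := by
  simp [inv_re, normSq_apply, sq]

theorem inv_ofReal_sub_I_im (t : ℝ) : ((t : ℂ) - I)⁻¹.im = 1 / (t ^ 2 + 1) := by
  simp [inv_im, normSq_apply, sq]

theorem norm_inv_ofReal_sub_I_le_one (t : ℝ) : ‖((t : ℂ) - I)⁻¹‖ ≤ 1 := by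
  have : 1 ≤ ‖(t : ℂ) - I‖ := by
    simpa using abs_im_le_norm ((t : ℂ) - I)
  rw [norm_inv]
  exact inv_le_one_of_one_le₀ this

theorem continuous_inv_ofReal_sub_I : Continuous fun t : ℝ ↦ ((t : ℂ) - I)⁻¹ :=
  (continuous_ofReal.sub continuous_const).inv₀ fun t h ↦ by
    simpa using congrArg im h

end Complex

theorem abs_div_sq_add_one_le (t : ℝ) : |t / (t ^ 2 + 1)| ≤ 1 / √(t ^ 2 + 1) := by
  have hpos : 0 < √(t ^ 2 + 1) := by positivity
  have hsq : √(t ^ 2 + 1) ^ 2 = t ^ 2 + 1 := Real.sq_sqrt (by positivity)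
  have ht : |t| ≤ √(t ^ 2 + 1) := Real.abs_le_sqrt (by linarith)
  rw [abs_div, abs_of_pos (by positivity : (0 : ℝ) < t ^ 2 + 1),
    div_le_div_iff₀ (by positivity) hpos]
  nlinarith

theorem one_div_sqrt_sq_add_one_sq (t : ℝ) : (1 / √(t ^ 2 + 1)) ^ 2 = 1 / (t ^ 2 + 1) := by
  rw [div_pow, one_pow, Real.sq_sqrt (by positivity)]

section

variable {Ω : Type*} [MeasurableSpace Ω] {μ : Measure Ω} {u : Ω → ℝ}

theorem integrable_inv_ofReal_sub_I_comp [IsFiniteMeasure μ] (hu : AEMeasurable u μ) :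
    Integrable (fun ω ↦ ((u ω : ℂ) - I)⁻¹) μ :=
  .of_bound (continuous_inv_ofReal_sub_I.comp_aestronglyMeasurable hu.aestronglyMeasurable) 1
    (ae_of_all _ fun ω ↦ norm_inv_ofReal_sub_I_le_one (u ω))

theorem memLp_one_div_sqrt_sq_add_one_comp [IsFiniteMeasure μ] (hu : AEMeasurable u μ)
    (p : ENNReal) : MemLp (fun ω ↦ 1 / √(u ω ^ 2 + 1)) p μ := by
  have hg : Measurable fun t : ℝ ↦ 1 / √(t ^ 2 + 1) := by fun_prop
  refine .of_bound (hg.comp_aemeasurable hu).aestronglyMeasurable 1 (ae_of_all _ fun ω ↦ ?_)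
  rw [Real.norm_of_nonneg (by positivity), div_le_one (by positivity)]
  exact Real.one_le_sqrt.mpr (by nlinarith)

theorem abs_re_integral_inv_ofReal_sub_I_le [IsFiniteMeasure μ] (hu : AEMeasurable u μ) :
    |(∫ ω, ((u ω : ℂ) - I)⁻¹ ∂μ).re| ≤ ∫ ω, 1 / √(u ω ^ 2 + 1) ∂μ := by
  rw [← reCLM_apply, ← reCLM.integral_comp_comm (integrable_inv_ofReal_sub_I_comp hu)]
  refine abs_integral_le_integral_abs.trans (integral_mono ?_ ?_ fun ω ↦ ?_)
  · exact (integrable_inv_ofReal_sub_I_comp hu).re.abs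
  · exact (memLp_one_div_sqrt_sq_add_one_comp hu 1).integrable le_rfl
  · simpa only [reCLM_apply, inv_ofReal_sub_I_re] using abs_div_sq_add_one_le (u ω)

theorem integral_one_div_sqrt_le_im_integral_inv_ofReal_sub_I [IsProbabilityMeasure μ]
    (hu : AEMeasurable u μ) :
    ∫ ω, 1 / √(u ω ^ 2 + 1) ∂μ ≤ |(∫ ω, ((u ω : ℂ) - I)⁻¹ ∂μ).im| ^ (1 / 2 : ℝ) := by
  rw [← imCLM_apply, ← imCLM.integral_comp_comm (integrable_inv_ofReal_sub_I_comp hu)]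
  simp only [imCLM_apply, inv_ofReal_sub_I_im, ← one_div_sqrt_sq_add_one_sq]
  rw [abs_of_nonneg (integral_nonneg fun ω ↦ sq_nonneg _), ← Real.sqrt_eq_rpow]
  exact integral_le_sqrt_integral_sq (memLp_one_div_sqrt_sq_add_one_comp hu 2)

end

theorem ofReal_mul_inv_sub_add_mul_I {a : ℝ} (ha : a ≠ 0) (x y : ℝ) :
    (a : ℂ) * ((x : ℂ) - (y + a * I))⁻¹ = ((((x - y) / a : ℝ) : ℂ) - I)⁻¹ := by
  have : (a : ℂ) ≠ 0 := ofReal_ne_zero.mpr ha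
  rw [← inv_inv (a : ℂ), ← mul_inv]
  congr 1
  push_cast
  field_simp
  ring

theorem stmt2 (σ : Measure ℝ) [IsProbabilityMeasure σ] (y a : ℝ) (ha : a ≠ 0) :
    |((a : ℂ) * borelTransform σ ((y : ℂ) + (a : ℂ) * Complex.I)).re| ≤
      ∫ x : ℝ, 1 / Real.sqrt (((x - y) / a) ^ 2 + 1) ∂σ ∧
    (∫ x : ℝ, 1 / Real.sqrt (((x - y) / a) ^ 2 + 1) ∂σ) ≤
      |((a : ℂ) * borelTransform σ ((y : ℂ) + (a : ℂ) * Complex.I)).im| ^ ((1 : ℝ) / 2) := by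
  have hF : (a : ℂ) * borelTransform σ (y + a * I) =
      ∫ x, ((((x - y) / a : ℝ) : ℂ) - I)⁻¹ ∂σ := by
    simp only [borelTransform, ← integral_const_mul, ofReal_mul_inv_sub_add_mul_I ha]
  have hu : AEMeasurable (fun x : ℝ ↦ (x - y) / a) σ := by fun_prop
  rw [hF]
  exact ⟨abs_re_integral_inv_ofReal_sub_I_le hu,
    integral_one_div_sqrt_le_im_integral_inv_ofReal_sub_I hu⟩
end

section
/- Let ψ : ℝ → ℝ be a continuously differentiable, positive, even function with ψ(0) = 1 such that x ↦ |ψ(x)| + (1 + |x|)·|ψ′(x)| is integrable on ℝ, let μ be a Borel probability measure on ℝ, and let 0 < α ≤ 1. Then sup over x ∈ ℝ and a > 0 of a^{−α}·(ψ_a * μ)(x) is finite if and only if d_μ^{α,∞} is finite. -/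
open MeasureTheory Complex Set

/-- `d_μ^{α,∞} = sup_{x ∈ ℝ} sup_{ε > 0} μ((x−ε, x+ε))/(2ε)^α`. -/
noncomputable def dAlpha (μ : Measure ℝ) (α : ℝ) : ENNReal :=
  ⨆ (x : ℝ) (ε : ℝ) (_ : 0 < ε),
    μ (Set.Ioo (x - ε) (x + ε)) / ENNReal.ofReal ((2 * ε) ^ α)

/-- `(ψ_a * μ)(x) = ∫ ψ((y − x)/a) dμ(y)`. -/
noncomputable def waveletConv (ψ : ℝ → ℝ) (a : ℝ) (μ : Measure ℝ) (x : ℝ) : ℝ :=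
  ∫ y : ℝ, ψ ((y - x) / a) ∂μ

/-! The measure of an interval is controlled by a wavelet coefficient because `ψ ≥ 1/2` near `0`:
`μ (x - ε, x + ε) ≤ 2 (ψ_a * μ)(x)` with `a = ε / δ`, so a bound `C a^α` on the coefficients
gives `d_μ^{α,∞} ≤ 2 C / (2δ)^α`.

Conversely, an even integrable `ψ` with integrable derivative vanishes at infinity, so
`ψ v ≤ ∫_{|v|}^∞ |ψ'|`. Integrating against `μ` and swapping the integrals (Tonelli),
`(ψ_a * μ)(x) ≤ ∫_0^∞ |ψ'(s)| μ (x - a s, x + a s) ds ≤ d_μ^{α,∞} (2a)^α ∫ (1 + |s|) |ψ'(s)| ds`,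
where `s^α ≤ 1 + s` because `α ≤ 1`. -/

open Filter Topology
open scoped ENNReal

lemma Real.rpow_le_one_add {t α : ℝ} (ht : 0 ≤ t) (hα0 : 0 ≤ α) (hα1 : α ≤ 1) :
    t ^ α ≤ 1 + t := by
  rcases le_total t 1 with h | h
  · linarith [Real.rpow_le_one ht h hα0]
  · linarith [Real.rpow_one t ▸ Real.rpow_le_rpow_of_exponent_le h hα1]

lemma abs_le_integral_Ioi_abs_of_hasDerivAt {f f' : ℝ → ℝ} {u : ℝ}
    (hderiv : ∀ x ∈ Ici u, HasDerivAt f (f' x) x) (hf' : IntegrableOn f' (Ioi u))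
    (hf : IntegrableOn f (Ioi u)) : |f u| ≤ ∫ t in Ioi u, |f' t| := by
  have hlim : Tendsto f atTop (𝓝 0) := tendsto_zero_of_hasDerivAt_of_integrableOn_Ioi
    (fun x hx => hderiv x (Ioi_subset_Ici_self hx)) hf' hf
  have hftc := integral_Ioi_of_hasDerivAt_of_tendsto' hderiv hf' hlim
  rw [zero_sub] at hftc
  calc |f u| = |∫ t in Ioi u, f' t| := by rw [hftc, abs_neg]
    _ ≤ ∫ t in Ioi u, |f' t| := abs_integral_le_integral_abs

lemma abs_le_integral_Ioi_abs_deriv_of_even {f : ℝ → ℝ} (hf : Differentiable ℝ f)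
    (heven : ∀ x, f (-x) = f x) (hfi : Integrable f) (hf'i : Integrable (deriv f)) (v : ℝ) :
    |f v| ≤ ∫ t in Ioi |v|, |deriv f t| := by
  have hfv : f v = f |v| := by rcases abs_choice v with h | h <;> simp [h, heven]
  rw [hfv]
  exact abs_le_integral_Ioi_abs_of_hasDerivAt (fun x _ => (hf x).hasDerivAt)
    hf'i.integrableOn hfi.integrableOn

lemma abs_le_integral_abs_deriv_of_even {f : ℝ → ℝ} (hf : Differentiable ℝ f)
    (heven : ∀ x, f (-x) = f x) (hfi : Integrable f) (hf'i : Integrable (deriv f)) (v : ℝ) :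
    |f v| ≤ ∫ t, |deriv f t| :=
  (abs_le_integral_Ioi_abs_deriv_of_even hf heven hfi hf'i v).trans
    (setIntegral_le_integral hf'i.abs (ae_of_all _ fun _ => abs_nonneg _))

lemma MeasureTheory.Integrable.of_one_add_abs_mul {f : ℝ → ℝ} (hf : AEStronglyMeasurable f)
    (h : Integrable fun s => (1 + |s|) * |f s|) : Integrable f :=
  h.mono' hf (ae_of_all _ fun s => by
    rw [Real.norm_eq_abs]; nlinarith [abs_nonneg s, abs_nonneg (f s)])

lemma dAlpha_le_iff {μ : Measure ℝ} {α : ℝ} {M : ℝ≥0∞} :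
    dAlpha μ α ≤ M ↔
      ∀ x ε, 0 < ε → μ (Ioo (x - ε) (x + ε)) ≤ M * ENNReal.ofReal ((2 * ε) ^ α) := by
  simp only [dAlpha, iSup_le_iff]
  refine forall_congr' fun x => forall_congr' fun ε => forall_congr' fun hε =>
    ENNReal.div_le_iff ?_ ENNReal.ofReal_ne_top
  exact (ENNReal.ofReal_pos.mpr (Real.rpow_pos_of_pos (by linarith) α)).ne'

lemma measure_Ioo_le_dAlpha_mul (μ : Measure ℝ) {α : ℝ} (hα0 : 0 ≤ α) (hα1 : α ≤ 1)
    (x : ℝ) {a : ℝ} (ha : 0 < a) (t : ℝ) :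
    μ (Ioo (x - a * t) (x + a * t)) ≤ dAlpha μ α * ENNReal.ofReal ((2 * a) ^ α * (1 + |t|)) := by
  rcases le_or_gt t 0 with ht | ht
  · rw [Ioo_eq_empty (by nlinarith), measure_empty]
    exact zero_le
  calc μ (Ioo (x - a * t) (x + a * t)) ≤ dAlpha μ α * ENNReal.ofReal ((2 * (a * t)) ^ α) :=
        dAlpha_le_iff.mp le_rfl x (a * t) (mul_pos ha ht)
    _ ≤ dAlpha μ α * ENNReal.ofReal ((2 * a) ^ α * (1 + |t|)) := by
        rw [← mul_assoc, Real.mul_rpow (by positivity) ht.le, abs_of_pos ht]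
        gcongr
        exact Real.rpow_le_one_add ht.le hα0 hα1

lemma mul_measureReal_Ioo_le_waveletConv {ψ : ℝ → ℝ} {μ : Measure ℝ} [IsFiniteMeasure μ]
    {c δ a : ℝ} (x : ℝ) (hψ : ∀ t, 0 ≤ ψ t) (hc : ∀ t, |t| < δ → c ≤ ψ t) (ha : 0 < a)
    (hint : Integrable (fun y => ψ ((y - x) / a)) μ) :
    c * μ.real (Ioo (x - a * δ) (x + a * δ)) ≤ waveletConv ψ a μ x := by
  rw [mul_comm, ← smul_eq_mul, ← integral_indicator_const c measurableSet_Ioo]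
  refine integral_mono ((integrable_const c).indicator measurableSet_Ioo) hint fun y => ?_
  by_cases hy : y ∈ Ioo (x - a * δ) (x + a * δ)
  · rw [indicator_of_mem hy]
    apply hc
    rw [abs_div, abs_of_pos ha, div_lt_iff₀ ha, abs_sub_lt_iff]
    constructor <;> linarith [hy.1, hy.2]
  · rw [indicator_of_notMem hy]
    exact hψ _

lemma lintegral_lintegral_Ioi_abs_sub_div {μ : Measure ℝ} [SFinite μ] {g : ℝ → ℝ≥0∞}
    (hg : Measurable g) (x : ℝ) {a : ℝ} (ha : 0 < a) :
    ∫⁻ y, (∫⁻ t in Ioi (|y - x| / a), g t) ∂μ = ∫⁻ t, g t * μ (Ioo (x - a * t) (x + a * t)) := by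
  have hmem : ∀ y t, t ∈ Ioi (|y - x| / a) ↔ y ∈ Ioo (x - a * t) (x + a * t) := fun y t => by
    rw [mem_Ioi, div_lt_iff₀ ha, mem_Ioo, abs_sub_lt_iff, mul_comm]
    constructor <;> rintro ⟨h₁, h₂⟩ <;> constructor <;> linarith
  have hmeas : Measurable (Function.uncurry fun y t => (Ioi (|y - x| / a)).indicator g t) :=
    (hg.comp measurable_snd).indicator
      (measurableSet_lt ((measurable_fst.sub_const x).abs.div_const a) measurable_snd)
  simp_rw [← lintegral_indicator measurableSet_Ioi]
  rw [lintegral_lintegral_swap hmeas.aemeasurable]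
  refine lintegral_congr fun t => ?_
  simp_rw [indicator_apply, hmem, ← indicator_apply (s := Ioo _ _) (f := fun _ => g t)]
  exact lintegral_indicator_const measurableSet_Ioo _

lemma dAlpha_ne_top_of_waveletConv_le {ψ : ℝ → ℝ} {μ : Measure ℝ} [IsFiniteMeasure μ]
    {α B C : ℝ} (hψc : Continuous ψ) (hψ0 : ψ 0 = 1) (hψ : ∀ t, 0 ≤ ψ t) (hB : ∀ t, ψ t ≤ B)
    (hC : ∀ x a, 0 < a → a ^ (-α) * waveletConv ψ a μ x ≤ C) : dAlpha μ α ≠ ⊤ := by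
  obtain ⟨δ, hδ, hψδ⟩ : ∃ δ > 0, ∀ t, |t| < δ → 1 / 2 ≤ ψ t := by
    have := Metric.eventually_nhds_iff.mp
      (hψc.continuousAt.eventually (lt_mem_nhds (by norm_num [hψ0] : (1 : ℝ) / 2 < ψ 0)))
    obtain ⟨δ, hδ, h⟩ := this
    exact ⟨δ, hδ, fun t ht => (h (by rwa [Real.dist_0_eq_abs])).le⟩
  refine ne_top_of_le_ne_top ENNReal.ofReal_ne_top
    (dAlpha_le_iff (M := ENNReal.ofReal (2 * C / (2 * δ) ^ α)).mpr fun x ε hε => ?_)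
  set a := ε / δ
  have ha : 0 < a := div_pos hε hδ
  have haδ : a * δ = ε := div_mul_cancel₀ ε hδ.ne'
  have hint : Integrable (fun y => ψ ((y - x) / a)) μ :=
    .of_bound (by fun_prop) B (ae_of_all _ fun y => by
      rw [Real.norm_of_nonneg (hψ _)]; exact hB _)
  have hlower := haδ ▸ mul_measureReal_Ioo_le_waveletConv x hψ hψδ ha hint
  have hupper : waveletConv ψ a μ x ≤ a ^ α * C := by
    have := hC x a ha
    rwa [Real.rpow_neg ha.le, inv_mul_le_iff₀ (Real.rpow_pos_of_pos ha α)] at this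
  have hscale : 2 * C / (2 * δ) ^ α * (2 * ε) ^ α = 2 * (a ^ α * C) := by
    rw [Real.div_rpow hε.le hδ.le, Real.mul_rpow zero_le_two hε.le,
      Real.mul_rpow zero_le_two hδ.le]
    have := Real.rpow_pos_of_pos hδ α
    have := Real.rpow_pos_of_pos zero_lt_two α
    field_simp
  rw [← ofReal_measureReal, ← ENNReal.ofReal_mul' (by positivity), hscale]
  exact ENNReal.ofReal_le_ofReal (by linarith)

lemma waveletConv_le_dAlpha {ψ : ℝ → ℝ} (hψd : ContDiff ℝ 1 ψ) (hψeven : ∀ x, ψ (-x) = ψ x)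
    (hψ : ∀ t, 0 ≤ ψ t) (hψi : Integrable ψ) (hψ'i : Integrable (deriv ψ))
    (hw : Integrable fun s => (1 + |s|) * |deriv ψ s|) {μ : Measure ℝ} [SFinite μ] {α : ℝ}
    (hα0 : 0 ≤ α) (hα1 : α ≤ 1) (hD : dAlpha μ α ≠ ⊤) (x : ℝ) {a : ℝ} (ha : 0 < a) :
    waveletConv ψ a μ x ≤
      (dAlpha μ α).toReal * (2 * a) ^ α * ∫ s, (1 + |s|) * |deriv ψ s| := by
  set D := (dAlpha μ α).toReal
  have hpoint : ∀ y, ENNReal.ofReal (ψ ((y - x) / a)) ≤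
      ∫⁻ t in Ioi (|y - x| / a), ENNReal.ofReal |deriv ψ t| := fun y => by
    rw [← ofReal_integral_eq_lintegral_ofReal hψ'i.abs.integrableOn
      (ae_of_all _ fun _ => abs_nonneg _)]
    rw [show |y - x| / a = |(y - x) / a| by rw [abs_div, abs_of_pos ha]]
    exact ENNReal.ofReal_le_ofReal ((le_abs_self _).trans
      (abs_le_integral_Ioi_abs_deriv_of_even (hψd.differentiable one_ne_zero) hψeven hψi hψ'i _))
  have hlayer : ∀ t, ENNReal.ofReal |deriv ψ t| * μ (Ioo (x - a * t) (x + a * t)) ≤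
      ENNReal.ofReal (D * (2 * a) ^ α * ((1 + |t|) * |deriv ψ t|)) := fun t => by
    calc ENNReal.ofReal |deriv ψ t| * μ (Ioo (x - a * t) (x + a * t))
        ≤ ENNReal.ofReal |deriv ψ t| *
            (ENNReal.ofReal D * ENNReal.ofReal ((2 * a) ^ α * (1 + |t|))) := by
          rw [ENNReal.ofReal_toReal hD]
          gcongr
          exact measure_Ioo_le_dAlpha_mul μ hα0 hα1 x ha t
      _ = ENNReal.ofReal (D * (2 * a) ^ α * ((1 + |t|) * |deriv ψ t|)) := by
          rw [← ENNReal.ofReal_mul ENNReal.toReal_nonneg,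
            ← ENNReal.ofReal_mul (abs_nonneg _)]
          congr 1
          ring
  have hlin : ∫⁻ y, ENNReal.ofReal (ψ ((y - x) / a)) ∂μ ≤
      ENNReal.ofReal (D * (2 * a) ^ α * ∫ s, (1 + |s|) * |deriv ψ s|) :=
    calc ∫⁻ y, ENNReal.ofReal (ψ ((y - x) / a)) ∂μ
        ≤ ∫⁻ y, (∫⁻ t in Ioi (|y - x| / a), ENNReal.ofReal |deriv ψ t|) ∂μ :=
          lintegral_mono hpoint
      _ = ∫⁻ t, ENNReal.ofReal |deriv ψ t| * μ (Ioo (x - a * t) (x + a * t)) :=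
          lintegral_lintegral_Ioi_abs_sub_div (by fun_prop) x ha
      _ ≤ ∫⁻ t, ENNReal.ofReal (D * (2 * a) ^ α * ((1 + |t|) * |deriv ψ t|)) :=
          lintegral_mono hlayer
      _ = ENNReal.ofReal (D * (2 * a) ^ α * ∫ s, (1 + |s|) * |deriv ψ s|) := by
          rw [← integral_const_mul, ofReal_integral_eq_lintegral_ofReal (hw.const_mul _)
            (ae_of_all _ fun s => by positivity)]
  rw [waveletConv, integral_eq_lintegral_of_nonneg_ae (ae_of_all _ fun y => hψ _)
    (by fun_prop : Continuous fun y => ψ ((y - x) / a)).aestronglyMeasurable]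
  exact ENNReal.toReal_le_of_le_ofReal (by positivity) hlin

theorem stmt7 (ψ : ℝ → ℝ) (hψC1 : ContDiff ℝ 1 ψ) (hψpos : ∀ x, 0 < ψ x)
    (hψeven : ∀ x, ψ (-x) = ψ x) (hψ0 : ψ 0 = 1)
    (hψint : MeasureTheory.Integrable (fun x => |ψ x| + (1 + |x|) * |deriv ψ x|))
    (μ : Measure ℝ) [IsProbabilityMeasure μ] (α : ℝ) (hα0 : 0 < α) (hα1 : α ≤ 1) :
    (∃ C : ℝ, ∀ (x : ℝ) (a : ℝ), 0 < a → a ^ (-α) * waveletConv ψ a μ x ≤ C) ↔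
      dAlpha μ α ≠ ⊤ := by
  have hψ : ∀ t, 0 ≤ ψ t := fun t => (hψpos t).le
  have hψ' : Continuous (deriv ψ) := hψC1.continuous_deriv le_rfl
  obtain ⟨hψi, hw⟩ := (integrable_add_iff_of_nonneg (f := fun x => |ψ x|)
    hψC1.continuous.abs.aestronglyMeasurable (ae_of_all _ fun _ => abs_nonneg _)
    (ae_of_all _ fun _ => by positivity)).mp hψint
  have hψi' : Integrable ψ := (integrable_norm_iff hψC1.continuous.aestronglyMeasurable).mp hψi
  have hψ'i : Integrable (deriv ψ) := .of_one_add_abs_mul hψ'.aestronglyMeasurable hw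
  constructor
  · rintro ⟨C, hC⟩
    exact dAlpha_ne_top_of_waveletConv_le hψC1.continuous hψ0 hψ (fun t => (le_abs_self _).trans
      (abs_le_integral_abs_deriv_of_even (hψC1.differentiable one_ne_zero) hψeven hψi' hψ'i t)) hC
  · intro hD
    refine ⟨(dAlpha μ α).toReal * 2 ^ α * ∫ s, (1 + |s|) * |deriv ψ s|, fun x a ha => ?_⟩
    calc a ^ (-α) * waveletConv ψ a μ x
        ≤ a ^ (-α) * ((dAlpha μ α).toReal * (2 * a) ^ α * ∫ s, (1 + |s|) * |deriv ψ s|) := by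
          gcongr
          exact waveletConv_le_dAlpha hψC1 hψeven hψ hψi' hψ'i hw hα0.le hα1 hD x ha
      _ = (dAlpha μ α).toReal * 2 ^ α * ∫ s, (1 + |s|) * |deriv ψ s| := by
          rw [Real.mul_rpow zero_le_two ha.le, Real.rpow_neg ha.le]
          have := Real.rpow_pos_of_pos ha α
          field_simp
end

section
/- Let ψ : ℝ → ℝ be a continuously differentiable, positive, even function with ψ(0) = 1 such that x ↦ |ψ(x)| + (1 + |x|)·|ψ′(x)| is integrable on ℝ, let μ be a Borel probability measure on ℝ, let 0 < α ≤ 1, let a > 0 and x ∈ ℝ. Then a^{−α}·(ψ_a * μ)(x) = −∫₀^∞ ψ′(y)·(2y)^α · [μ((x − ay, x + ay))/(2ay)^α] dy. -/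
/-!
An even function `ψ` that vanishes at infinity satisfies `ψ s = -∫_{|s|}^∞ ψ'`, so
`ψ ((z - x) / a) = -∫_0^∞ ψ'(y) 𝟙{z ∈ (x - a y, x + a y)} dy`. Integrating in `z` against `μ` and
swapping the integrals (the integrand is dominated by `|ψ'(y)|`, and `μ` is finite) gives
`(ψ_a * μ)(x) = -∫_0^∞ ψ'(y) μ((x - a y, x + a y)) dy`; the weights `(2y)^α / (2ay)^α` then
collapse to `a^(-α)`.
-/

open MeasureTheory Complex Set Filter Topology

theorem integrable_indicator_Ioo_prod {μ ν : Measure ℝ} [IsFiniteMeasure μ] [SFinite ν]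
    {g : ℝ → ℝ} (hg : Integrable g ν) (a x : ℝ) :
    Integrable (fun p : ℝ × ℝ => (Ioo (x - a * p.2) (x + a * p.2)).indicator (fun _ => g p.2) p.1)
      (μ.prod ν) := by
  have hS : MeasurableSet {p : ℝ × ℝ | p.1 ∈ Ioo (x - a * p.2) (x + a * p.2)} :=
    (measurableSet_lt (by fun_prop) measurable_fst).inter
      (measurableSet_lt measurable_fst (by fun_prop))
  exact ((hg.comp_snd μ).indicator hS).congr (.of_forall fun _ => rfl)

section

variable {f : ℝ → ℝ}

theorem integral_Ioi_deriv_eq_neg (hf : Differentiable ℝ f) (hfi : Integrable f)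
    (hf'i : Integrable (deriv f)) (t : ℝ) : ∫ y in Ioi t, deriv f y = -f t := by
  have hderiv : ∀ y, HasDerivAt f (deriv f y) y := fun y => (hf y).hasDerivAt
  have hlim : Tendsto f atTop (𝓝 0) :=
    tendsto_zero_of_hasDerivAt_of_integrableOn_Ioi (a := t) (fun y _ => hderiv y)
      hf'i.integrableOn hfi.integrableOn
  simpa using integral_Ioi_of_hasDerivAt_of_tendsto' (fun y _ => hderiv y) hf'i.integrableOn hlim

theorem apply_abs_of_even (heven : ∀ s, f (-s) = f s) (s : ℝ) : f |s| = f s := by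
  rcases abs_choice s with h | h <;> simp [h, heven]

theorem mem_Ioo_sub_mul_add_mul_iff {a : ℝ} (ha : 0 < a) (x y z : ℝ) :
    z ∈ Ioo (x - a * y) (x + a * y) ↔ |z - x| / a < y := by
  rw [div_lt_iff₀ ha, abs_lt, mem_Ioo]
  constructor <;> rintro ⟨h₁, h₂⟩ <;> constructor <;> linarith

theorem apply_div_eq_neg_integral_indicator_Ioo (hf : Differentiable ℝ f) (hfi : Integrable f)
    (hf'i : Integrable (deriv f)) (heven : ∀ s, f (-s) = f s) {a : ℝ} (ha : 0 < a) (x z : ℝ) :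
    f ((z - x) / a) =
      -∫ y in Ioi 0, (Ioo (x - a * y) (x + a * y)).indicator (fun _ => deriv f y) z := by
  have habs : f ((z - x) / a) = f (|z - x| / a) := by
    rw [← apply_abs_of_even heven, abs_div, abs_of_pos ha]
  have hind : ∀ y, (Ioo (x - a * y) (x + a * y)).indicator (fun _ => deriv f y) z =
      (Ioi (|z - x| / a)).indicator (deriv f) y := by
    intro y
    simp only [indicator_apply, mem_Ioo_sub_mul_add_mul_iff ha, mem_Ioi]
  simp_rw [hind]
  rw [setIntegral_indicator measurableSet_Ioi, Ioi_inter_Ioi,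
    sup_eq_right.mpr (by positivity), integral_Ioi_deriv_eq_neg hf hfi hf'i, neg_neg, habs]

theorem integral_comp_div_eq_neg_integral_deriv_mul_measureReal (hf : Differentiable ℝ f)
    (hfi : Integrable f) (hf'i : Integrable (deriv f)) (heven : ∀ s, f (-s) = f s)
    (μ : Measure ℝ) [IsFiniteMeasure μ] {a : ℝ} (ha : 0 < a) (x : ℝ) :
    ∫ z, f ((z - x) / a) ∂μ = -∫ y in Ioi 0, deriv f y * μ.real (Ioo (x - a * y) (x + a * y)) := by
  calc ∫ z, f ((z - x) / a) ∂μ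
      = ∫ z, -(∫ y in Ioi 0, (Ioo (x - a * y) (x + a * y)).indicator (fun _ => deriv f y) z) ∂μ :=
        integral_congr_ae (.of_forall
          (apply_div_eq_neg_integral_indicator_Ioo hf hfi hf'i heven ha x))
    _ = -∫ y in Ioi 0,
          (∫ z, (Ioo (x - a * y) (x + a * y)).indicator (fun _ => deriv f y) z ∂μ) := by
        rw [integral_neg, integral_integral_swap (integrable_indicator_Ioo_prod hf'i.restrict a x)]
    _ = -∫ y in Ioi 0, deriv f y * μ.real (Ioo (x - a * y) (x + a * y)) := by
        simp only [integral_indicator_const _ measurableSet_Ioo, smul_eq_mul, mul_comm]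

end

theorem stmt8_general (ψ : ℝ → ℝ) (hψC1 : ContDiff ℝ 1 ψ)
    (hψeven : ∀ x, ψ (-x) = ψ x)
    (hψint : MeasureTheory.Integrable (fun x => |ψ x| + (1 + |x|) * |deriv ψ x|))
    (μ : Measure ℝ) [IsProbabilityMeasure μ] (α : ℝ)
    (a : ℝ) (ha : 0 < a) (x : ℝ) :
    a ^ (-α) * waveletConv ψ a μ x =
      -∫ y in Set.Ioi (0 : ℝ),
        deriv ψ y * (2 * y) ^ α *
          ((μ (Set.Ioo (x - a * y) (x + a * y))).toReal / (2 * a * y) ^ α) := by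
  have hψi : Integrable ψ := hψint.mono' hψC1.continuous.aestronglyMeasurable
    (.of_forall fun z => by
      rw [Real.norm_eq_abs]; nlinarith [abs_nonneg z, abs_nonneg (deriv ψ z)])
  have hψ'i : Integrable (deriv ψ) := hψint.mono' (measurable_deriv ψ).aestronglyMeasurable
    (.of_forall fun z => by
      rw [Real.norm_eq_abs]; nlinarith [abs_nonneg z, abs_nonneg (ψ z), abs_nonneg (deriv ψ z)])
  have hscale : ∀ y ∈ Ioi (0 : ℝ), deriv ψ y * (2 * y) ^ α *
      ((μ (Ioo (x - a * y) (x + a * y))).toReal / (2 * a * y) ^ α) =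
      a ^ (-α) * (deriv ψ y * μ.real (Ioo (x - a * y) (x + a * y))) := by
    intro y (hy : 0 < y)
    rw [show 2 * a * y = a * (2 * y) by ring, Real.mul_rpow ha.le (by positivity),
      Real.rpow_neg ha.le, measureReal_def]
    have : (2 * y) ^ α ≠ 0 := (Real.rpow_pos_of_pos (by positivity) α).ne'
    have : a ^ α ≠ 0 := (Real.rpow_pos_of_pos ha α).ne'
    field_simp
  rw [waveletConv, integral_comp_div_eq_neg_integral_deriv_mul_measureReal
      (hψC1.differentiable one_ne_zero) hψi hψ'i hψeven μ ha x,
    setIntegral_congr_fun measurableSet_Ioi hscale, integral_const_mul, mul_neg]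

theorem stmt8 (ψ : ℝ → ℝ) (hψC1 : ContDiff ℝ 1 ψ) (hψpos : ∀ x, 0 < ψ x)
    (hψeven : ∀ x, ψ (-x) = ψ x) (hψ0 : ψ 0 = 1)
    (hψint : MeasureTheory.Integrable (fun x => |ψ x| + (1 + |x|) * |deriv ψ x|))
    (μ : Measure ℝ) [IsProbabilityMeasure μ] (α : ℝ) (hα0 : 0 < α) (hα1 : α ≤ 1)
    (a : ℝ) (ha : 0 < a) (x : ℝ) :
    a ^ (-α) * waveletConv ψ a μ x =
      -∫ y in Set.Ioi (0 : ℝ),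
        deriv ψ y * (2 * y) ^ α *
          ((μ (Set.Ioo (x - a * y) (x + a * y))).toReal / (2 * a * y) ^ α) :=
  stmt8_general ψ hψC1 hψeven hψint μ α a ha x
end

section
/- Let σ be a Borel probability measure on ℝ, let 0 < α ≤ 1, and let μ be a Borel probability measure on ℝ which is uniformly α-Hölder continuous. Then for every y ∈ ℝ and every a > 0, |a^{1−α} · Im(∫_ℝ 1/(x + F_σ(y + ia)⁻¹) dμ(x))| ≤ 2π · d_μ^{α,∞}. -/
open MeasureTheory Complex Set

/-!
Write `z = y + i a` and `F = F_σ(z)`. Jensen's inequality for `‖·‖²` gives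
`‖F‖² ≤ ∫ |x - z|⁻² dσ = Im F / a`, i.e. `F⁻¹ = -c - i b` with `b ≥ a`. Then
`Im (x + F⁻¹)⁻¹ = b / ((x - c)² + b²)` is the Poisson kernel at height `b`. Its superlevel set
`{· > s}` is an interval of radius `√(b / s)`, of `μ`-measure at most `d (4 b / s)^(α/2)`, and
the layer cake formula over `s ∈ (0, 1/b]` yields `∫ · dμ ≤ 4 d b^(α-1) ≤ 4 d a^(α-1)`;
finally `4 ≤ 2π`.
-/

lemma sq_norm_integral_le_integral_sq_norm {Ω E : Type*} [MeasurableSpace Ω]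
    [NormedAddCommGroup E] [NormedSpace ℝ E] [CompleteSpace E]
    {ν : Measure Ω} [IsProbabilityMeasure ν] {f : Ω → E} (hf : Integrable f ν)
    (hf2 : Integrable (fun x => ‖f x‖ ^ 2) ν) :
    ‖∫ x, f x ∂ν‖ ^ 2 ≤ ∫ x, ‖f x‖ ^ 2 ∂ν :=
  ((convexOn_norm convex_univ).pow (fun _ _ => norm_nonneg _) 2).map_integral_le
    (by fun_prop) isClosed_univ (ae_of_all _ fun _ => mem_univ _) hf hf2

lemma integral_complex_im {Ω : Type*} [MeasurableSpace Ω] {ν : Measure Ω} {f : Ω → ℂ}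
    (hf : Integrable f ν) : (∫ x, f x ∂ν).im = ∫ x, (f x).im ∂ν := by
  simpa only [RCLike.im_to_complex] using (integral_im hf).symm

lemma integrable_inv_ofReal_add {ν : Measure ℝ} [IsFiniteMeasure ν] {w : ℂ} (hw : w.im ≠ 0) :
    Integrable (fun x : ℝ => ((x : ℂ) + w)⁻¹) ν := by
  have hne : ∀ x : ℝ, (x : ℂ) + w ≠ 0 := fun x h => hw (by simpa using congrArg im h)
  refine Integrable.mono' (integrable_const |w.im|⁻¹) ?_ (ae_of_all _ fun x => ?_)
  · exact ((continuous_ofReal.add continuous_const).inv₀ hne).aestronglyMeasurable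
  · rw [norm_inv]
    exact inv_anti₀ (abs_pos.2 hw) (by simpa using abs_im_le_norm ((x : ℂ) + w))

lemma integrable_inv_ofReal_sub {ν : Measure ℝ} [IsFiniteMeasure ν] {z : ℂ} (hz : z.im ≠ 0) :
    Integrable (fun x : ℝ => ((x : ℂ) - z)⁻¹) ν := by
  simpa only [sub_eq_add_neg] using integrable_inv_ofReal_add (ν := ν) (w := -z) (by simpa using hz)

lemma im_mul_sq_norm_inv_ofReal_sub (x : ℝ) (z : ℂ) :
    z.im * ‖((x : ℂ) - z)⁻¹‖ ^ 2 = ((x : ℂ) - z)⁻¹.im := by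
  rw [norm_inv, inv_pow, Complex.sq_norm, inv_im]
  simp [div_eq_mul_inv]

lemma im_inv_ofReal_sub_pos (x : ℝ) {z : ℂ} (hz : 0 < z.im) : 0 < ((x : ℂ) - z)⁻¹.im := by
  have hne : (x : ℂ) - z ≠ 0 := fun h => hz.ne' (by simpa using congrArg im h)
  rw [← im_mul_sq_norm_inv_ofReal_sub]
  exact mul_pos hz (pow_pos (norm_pos_iff.2 (inv_ne_zero hne)) 2)

section BorelTransform

variable (σ : Measure ℝ) [IsProbabilityMeasure σ] {z : ℂ} (hz : 0 < z.im)
include hz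

lemma im_borelTransform_pos : 0 < (borelTransform σ z).im := by
  have hint := integrable_inv_ofReal_sub (ν := σ) hz.ne'
  rw [borelTransform, integral_complex_im hint, integral_pos_iff_support_of_nonneg
    (fun x => (im_inv_ofReal_sub_pos x hz).le) hint.im,
    Function.support_eq_univ fun x => (im_inv_ofReal_sub_pos x hz).ne', measure_univ]
  exact one_pos

lemma im_mul_sq_norm_borelTransform_le :
    z.im * ‖borelTransform σ z‖ ^ 2 ≤ (borelTransform σ z).im := by
  have hint := integrable_inv_ofReal_sub (ν := σ) hz.ne'
  have hint2 : Integrable (fun x : ℝ => ‖((x : ℂ) - z)⁻¹‖ ^ 2) σ := by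
    refine (hint.im.div_const z.im).congr (ae_of_all _ fun x => ?_)
    change ((x : ℂ) - z)⁻¹.im / z.im = _
    rw [← im_mul_sq_norm_inv_ofReal_sub, mul_div_cancel_left₀ _ hz.ne']
  calc z.im * ‖borelTransform σ z‖ ^ 2
      ≤ z.im * ∫ x, ‖((x : ℂ) - z)⁻¹‖ ^ 2 ∂σ :=
        mul_le_mul_of_nonneg_left (sq_norm_integral_le_integral_sq_norm hint hint2) hz.le
    _ = (borelTransform σ z).im := by
        simp only [borelTransform, integral_complex_im hint, ← integral_const_mul,
          im_mul_sq_norm_inv_ofReal_sub]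

theorem im_inv_borelTransform_le : (borelTransform σ z)⁻¹.im ≤ -z.im := by
  have hpos := im_borelTransform_pos σ hz
  have hF : 0 < normSq (borelTransform σ z) :=
    normSq_pos.2 fun h => by simp [h] at hpos
  rw [inv_im, neg_div, neg_le_neg_iff, le_div_iff₀ hF, ← Complex.sq_norm]
  exact im_mul_sq_norm_borelTransform_le σ hz

end BorelTransform

lemma measure_Ioo_le_dAlpha (μ : Measure ℝ) (α x : ℝ) {ε : ℝ} (hε : 0 < ε) :
    μ (Ioo (x - ε) (x + ε)) ≤ dAlpha μ α * ENNReal.ofReal ((2 * ε) ^ α) := by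
  have hpos : 0 < (2 * ε) ^ α := Real.rpow_pos_of_pos (by linarith) α
  refine (ENNReal.div_le_iff (by simp [hpos]) ENNReal.ofReal_ne_top).1 ?_
  exact le_iSup_of_le x <| le_iSup_of_le ε <| le_iSup_of_le hε le_rfl

/-- The Poisson kernel of the upper half-plane at `c + i b`, without the factor `π⁻¹`. -/
noncomputable def halfPlanePoissonKernel (b c t : ℝ) : ℝ := b / ((t - c) ^ 2 + b ^ 2)

lemma im_inv_ofReal_add_eq_halfPlanePoissonKernel (x : ℝ) (w : ℂ) :
    ((x : ℂ) + w)⁻¹.im = halfPlanePoissonKernel (-w.im) (-w.re) x := by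
  rw [inv_im, normSq_apply, halfPlanePoissonKernel]
  simp only [add_re, ofReal_re, add_im, ofReal_im, zero_add]
  ring

lemma measurable_halfPlanePoissonKernel (b c : ℝ) : Measurable (halfPlanePoissonKernel b c) := by
  unfold halfPlanePoissonKernel; fun_prop

section HalfPlanePoissonKernel

variable (μ : Measure ℝ) (α : ℝ) {b : ℝ} (hb : 0 < b) (c : ℝ)
include hb

lemma halfPlanePoissonKernel_pos (t : ℝ) : 0 < halfPlanePoissonKernel b c t := by
  unfold halfPlanePoissonKernel; positivity

lemma halfPlanePoissonKernel_le (t : ℝ) : halfPlanePoissonKernel b c t ≤ b⁻¹ := by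
  rw [halfPlanePoissonKernel, div_le_iff₀ (by positivity)]
  field_simp
  nlinarith [sq_nonneg (t - c)]

lemma setOf_lt_halfPlanePoissonKernel_subset {s : ℝ} (hs : 0 < s) :
    {t | s < halfPlanePoissonKernel b c t} ⊆ Ioo (c - √(b / s)) (c + √(b / s)) := by
  intro t (ht : s < halfPlanePoissonKernel b c t)
  have hlt : (t - c) ^ 2 < b / s := by
    rw [halfPlanePoissonKernel, lt_div_iff₀ (by positivity)] at ht
    rw [lt_div_iff₀ hs]
    nlinarith
  have := abs_lt.1 (Real.lt_sqrt (abs_nonneg _) |>.2 (by rwa [sq_abs]))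
  constructor <;> linarith

lemma measure_lt_halfPlanePoissonKernel_le {s : ℝ} (hs : 0 < s) :
    μ {t | s < halfPlanePoissonKernel b c t} ≤
      dAlpha μ α * ENNReal.ofReal (2 ^ α * b ^ (α / 2) * s ^ (-(α / 2))) := by
  have hr : 0 < √(b / s) := Real.sqrt_pos.2 (div_pos hb hs)
  have hrpow : (2 * √(b / s)) ^ α = 2 ^ α * b ^ (α / 2) * s ^ (-(α / 2)) := by
    rw [Real.mul_rpow zero_le_two hr.le, Real.sqrt_eq_rpow,
      ← Real.rpow_mul (div_nonneg hb.le hs.le),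
      Real.div_rpow hb.le hs.le, Real.rpow_neg hs.le, one_div_mul_eq_div, div_eq_mul_inv, mul_assoc]
  calc μ {t | s < halfPlanePoissonKernel b c t}
      ≤ μ (Ioo (c - √(b / s)) (c + √(b / s))) :=
        measure_mono (setOf_lt_halfPlanePoissonKernel_subset hb c hs)
    _ ≤ _ := hrpow ▸ measure_Ioo_le_dAlpha μ α c hr

lemma lintegral_halfPlanePoissonKernel_le (hα : α < 2) :
    ∫⁻ t, ENNReal.ofReal (halfPlanePoissonKernel b c t) ∂μ ≤
      dAlpha μ α * ENNReal.ofReal (2 ^ α * b ^ (α - 1) / (1 - α / 2)) := by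
  set K : ℝ := 2 ^ α * b ^ (α / 2)
  have hvanish : ∀ s ∈ Ioi b⁻¹, μ {t | s < halfPlanePoissonKernel b c t} = 0 := fun s hs => by
    have : {t | s < halfPlanePoissonKernel b c t} = ∅ := eq_empty_of_forall_notMem fun t ht =>
      (halfPlanePoissonKernel_le hb c t).not_gt ((mem_Ioi.1 hs).trans ht)
    rw [this, measure_empty]
  have hexp : -1 < -(α / 2) := by linarith
  have hint : IntegrableOn (fun s : ℝ => K * s ^ (-(α / 2))) (Ioc 0 b⁻¹) :=
    (intervalIntegrable_iff_integrableOn_Ioc_of_le (inv_pos.2 hb).le).1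
      ((intervalIntegral.intervalIntegrable_rpow' hexp).const_mul K)
  have hcalc : ∫ s in Ioc 0 b⁻¹, K * s ^ (-(α / 2)) = 2 ^ α * b ^ (α - 1) / (1 - α / 2) := by
    rw [← intervalIntegral.integral_of_le (inv_pos.2 hb).le, intervalIntegral.integral_const_mul,
      integral_rpow (Or.inl hexp), Real.zero_rpow (by linarith), sub_zero, Real.inv_rpow hb.le,
      ← Real.rpow_neg hb.le, ← mul_div_assoc, mul_assoc, ← Real.rpow_add hb, neg_add_eq_sub]
    ring_nf
  rw [lintegral_eq_lintegral_meas_lt μ (ae_of_all _ fun t => (halfPlanePoissonKernel_pos hb c t).le)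
    (measurable_halfPlanePoissonKernel b c).aemeasurable, ← Ioc_union_Ioi_eq_Ioi (inv_pos.2 hb).le,
    lintegral_union measurableSet_Ioi Ioc_disjoint_Ioi_same,
    setLIntegral_congr_fun measurableSet_Ioi hvanish,
    lintegral_zero, add_zero]
  calc ∫⁻ s in Ioc 0 b⁻¹, μ {t | s < halfPlanePoissonKernel b c t}
      ≤ ∫⁻ s in Ioc 0 b⁻¹, dAlpha μ α * ENNReal.ofReal (K * s ^ (-(α / 2))) :=
        setLIntegral_mono' measurableSet_Ioc fun s hs =>
          measure_lt_halfPlanePoissonKernel_le μ α hb c hs.1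
    _ = dAlpha μ α * ENNReal.ofReal (∫ s in Ioc 0 b⁻¹, K * s ^ (-(α / 2))) := by
        rw [lintegral_const_mul _ (by fun_prop), ofReal_integral_eq_lintegral_ofReal hint
          ((ae_restrict_mem measurableSet_Ioc).mono fun s hs =>
            mul_nonneg (by positivity) (Real.rpow_nonneg (le_of_lt hs.1) _))]
    _ = _ := by rw [hcalc]

lemma integral_halfPlanePoissonKernel_le (hα : α ≤ 1) (hd : dAlpha μ α ≠ ⊤) :
    ∫ t, halfPlanePoissonKernel b c t ∂μ ≤ 4 * (dAlpha μ α).toReal * b ^ (α - 1) := by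
  have hbα : 0 < b ^ (α - 1) := Real.rpow_pos_of_pos hb _
  have htwo : (2 : ℝ) ^ α ≤ 2 := by
    simpa using Real.rpow_le_rpow_of_exponent_le one_le_two hα
  have hconst : 2 ^ α * b ^ (α - 1) / (1 - α / 2) ≤ 4 * b ^ (α - 1) := by
    rw [div_le_iff₀ (by linarith)]
    nlinarith [mul_le_mul_of_nonneg_right htwo hbα.le]
  rw [integral_eq_lintegral_of_nonneg_ae
    (ae_of_all _ fun t => (halfPlanePoissonKernel_pos hb c t).le)
    (measurable_halfPlanePoissonKernel b c).aestronglyMeasurable]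
  calc (∫⁻ t, ENNReal.ofReal (halfPlanePoissonKernel b c t) ∂μ).toReal
      ≤ (dAlpha μ α * ENNReal.ofReal (2 ^ α * b ^ (α - 1) / (1 - α / 2))).toReal :=
        ENNReal.toReal_mono (ENNReal.mul_ne_top hd ENNReal.ofReal_ne_top)
          (lintegral_halfPlanePoissonKernel_le μ α hb c (by linarith))
    _ = (dAlpha μ α).toReal * (2 ^ α * b ^ (α - 1) / (1 - α / 2)) := by
        rw [ENNReal.toReal_mul, ENNReal.toReal_ofReal (div_nonneg (by positivity) (by linarith))]
    _ ≤ (dAlpha μ α).toReal * (4 * b ^ (α - 1)) := by gcongr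
    _ = 4 * (dAlpha μ α).toReal * b ^ (α - 1) := by ring

end HalfPlanePoissonKernel

theorem stmt14_general (σ : Measure ℝ) [IsProbabilityMeasure σ]
    (α : ℝ) (hα1 : α ≤ 1)
    (μ : Measure ℝ) [IsProbabilityMeasure μ] (hμ : dAlpha μ α ≠ ⊤)
    (y : ℝ) (a : ℝ) (ha : 0 < a) :
    |a ^ (1 - α) *
        (∫ x : ℝ,
          ((x : ℂ) + (borelTransform σ ((y : ℂ) + (a : ℂ) * Complex.I))⁻¹)⁻¹ ∂μ).im| ≤
      2 * Real.pi * (dAlpha μ α).toReal := by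
  set u := (borelTransform σ ((y : ℂ) + (a : ℂ) * Complex.I))⁻¹
  have hz : ((y : ℂ) + (a : ℂ) * Complex.I).im = a := by simp
  have hab : a ≤ -u.im := by
    have := im_inv_borelTransform_le σ (hz ▸ ha)
    rw [hz] at this
    linarith
  have hb : 0 < -u.im := ha.trans_le hab
  rw [integral_complex_im (integrable_inv_ofReal_add (by linarith))]
  simp_rw [im_inv_ofReal_add_eq_halfPlanePoissonKernel]
  rw [abs_of_nonneg (mul_nonneg (by positivity)
    (integral_nonneg fun x => (halfPlanePoissonKernel_pos hb _ x).le))]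
  calc a ^ (1 - α) * ∫ x, halfPlanePoissonKernel (-u.im) (-u.re) x ∂μ
      ≤ a ^ (1 - α) * (4 * (dAlpha μ α).toReal * (-u.im) ^ (α - 1)) := by
        gcongr; exact integral_halfPlanePoissonKernel_le μ α hb _ hα1 hμ
    _ ≤ a ^ (1 - α) * (4 * (dAlpha μ α).toReal * a ^ (α - 1)) := by
        have := Real.rpow_le_rpow_of_nonpos ha hab (by linarith : α - 1 ≤ 0)
        gcongr
    _ = 4 * (dAlpha μ α).toReal := by
        rw [mul_left_comm, ← Real.rpow_add ha]; norm_num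
    _ ≤ 2 * Real.pi * (dAlpha μ α).toReal := by
        gcongr; linarith [Real.pi_gt_three]

theorem stmt14 (σ : Measure ℝ) [IsProbabilityMeasure σ]
    (α : ℝ) (hα0 : 0 < α) (hα1 : α ≤ 1)
    (μ : Measure ℝ) [IsProbabilityMeasure μ] (hμ : dAlpha μ α ≠ ⊤)
    (y : ℝ) (a : ℝ) (ha : 0 < a) :
    |a ^ (1 - α) *
        (∫ x : ℝ,
          ((x : ℂ) + (borelTransform σ ((y : ℂ) + (a : ℂ) * Complex.I))⁻¹)⁻¹ ∂μ).im| ≤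
      2 * Real.pi * (dAlpha μ α).toReal :=
  stmt14_general σ α hα1 μ hμ y a ha
end
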